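/- arXiv:2106.04677 — 4 statements merged into one kernel-verified Lean document; each statement's English description precedes it below -/
import Mathlib

section
/- If Y = X + W where X and W are independent square-integrable real random variables with W zero mean, then Var(E[X|Y]) · Var(Y) ≥ (Var(X))^2. -/
open MeasureTheory ProbabilityTheory

section Aux

variable {Ω : Type*} [MeasurableSpace Ω] {μ : Measure Ω}

lemma memLp_mul_int {f g : Ω → ℝ} (hf : MemLp f 2 μ) (hg : MemLp g 2 μ) :
    Integrable (fun ω => f ω * g ω) μ := by
  rw [← memLp_one_iff_integrable]
  have := hg.smul (φ := f) hf (p := 2) (q := 2) (r := 1)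
  exact this

lemma cs_integral {f g : Ω → ℝ} (hf : MemLp f 2 μ) (hg : MemLp g 2 μ) :
    (∫ ω, f ω * g ω ∂μ) ^ 2 ≤ (∫ ω, f ω ^ 2 ∂μ) * (∫ ω, g ω ^ 2 ∂μ) := by
  have hconj : Real.HolderConjugate 2 2 := Real.holderConjugate_iff.mpr ⟨one_lt_two, by norm_num⟩
  have hf2 : MemLp f (ENNReal.ofReal 2) μ := by
    convert hf using 2; norm_num
  have hg2 : MemLp g (ENNReal.ofReal 2) μ := by
    convert hg using 2; norm_num
  have h := integral_mul_norm_le_Lp_mul_Lq hconj hf2 hg2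
  have habs : |∫ ω, f ω * g ω ∂μ| ≤ ∫ ω, ‖f ω‖ * ‖g ω‖ ∂μ := by
    calc |∫ ω, f ω * g ω ∂μ| ≤ ∫ ω, ‖f ω * g ω‖ ∂μ := norm_integral_le_integral_norm (fun ω => f ω * g ω)
      _ = ∫ ω, ‖f ω‖ * ‖g ω‖ ∂μ := by congr 1; ext ω; exact norm_mul _ _
  have hfn : ∫ ω, ‖f ω‖ ^ (2:ℝ) ∂μ = ∫ ω, f ω ^ 2 ∂μ := by
    congr 1; ext ω
    rw [Real.norm_eq_abs, show ((2:ℝ)) = ((2:ℕ):ℝ) by norm_num, Real.rpow_natCast]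
    exact sq_abs _
  have hgn : ∫ ω, ‖g ω‖ ^ (2:ℝ) ∂μ = ∫ ω, g ω ^ 2 ∂μ := by
    congr 1; ext ω
    rw [Real.norm_eq_abs, show ((2:ℝ)) = ((2:ℕ):ℝ) by norm_num, Real.rpow_natCast]
    exact sq_abs _
  have hfpos : 0 ≤ ∫ ω, f ω ^ 2 ∂μ := integral_nonneg fun ω => sq_nonneg _
  have hgpos : 0 ≤ ∫ ω, g ω ^ 2 ∂μ := integral_nonneg fun ω => sq_nonneg _
  calc (∫ ω, f ω * g ω ∂μ) ^ 2 = |∫ ω, f ω * g ω ∂μ| ^ 2 := (sq_abs _).symm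
    _ ≤ ((∫ ω, f ω ^ 2 ∂μ) ^ (1/2:ℝ) * (∫ ω, g ω ^ 2 ∂μ) ^ (1/2:ℝ)) ^ 2 := by
        apply pow_le_pow_left₀ (abs_nonneg _)
        rw [← hfn, ← hgn]; exact habs.trans h
    _ = (∫ ω, f ω ^ 2 ∂μ) * (∫ ω, g ω ^ 2 ∂μ) := by
        rw [mul_pow, ← Real.rpow_natCast _ 2, ← Real.rpow_natCast _ 2,
          ← Real.rpow_mul hfpos, ← Real.rpow_mul hgpos]
        norm_num

lemma memLp_condexp_two {m m0 : MeasurableSpace Ω} {μ : Measure Ω} (hm : m ≤ m0)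
    [IsFiniteMeasure μ] {f : Ω → ℝ} (hf : MemLp f 2 μ) :
    MemLp (μ[f|m]) 2 μ := by
  haveI : SigmaFinite (μ.trim hm) := inferInstance
  set g : Lp ℝ 2 μ := (condExpL2 ℝ ℝ hm (hf.toLp f) : Lp ℝ 2 μ) with hg
  have hae : (g : Ω → ℝ) =ᵐ[μ] μ[f|m] := by
    refine ae_eq_condExp_of_forall_setIntegral_eq hm (hf.integrable one_le_two)
      (fun s _ hμs => integrableOn_Lp_of_measure_ne_top g fact_one_le_two_ennreal.elim hμs.ne)
      (fun s hs hμs => ?_) ?_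
    · rw [integral_condExpL2_eq hm (hf.toLp f) hs hμs.ne]
      exact setIntegral_congr_ae (hm s hs) ((MemLp.coeFn_toLp hf).mono fun x hx _ => hx)
    · exact aestronglyMeasurable_condExpL2 hm _
  exact (Lp.memLp g).ae_eq hae

end Aux

/-- If `Y = X + W` with `X, W` independent square-integrable and `E[W] = 0`, then
`Var(E[X|Y]) · Var(Y) ≥ (Var X)²`. -/
theorem variance_condexp_mul_variance_ge {Ω : Type*} [MeasurableSpace Ω] (μ : Measure Ω)
    [IsProbabilityMeasure μ] (X W : Ω → ℝ)
    (hXm : Measurable X) (hWm : Measurable W)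
    (hX : MemLp X 2 μ) (hW : MemLp W 2 μ)
    (hindep : IndepFun X W μ)
    (hWmean : ∫ ω, W ω ∂μ = 0) :
    variance (μ[X|MeasurableSpace.comap (fun ω => X ω + W ω) Real.measurableSpace]) μ
        * variance (fun ω => X ω + W ω) μ
      ≥ (variance X μ) ^ 2 := by
  set Y : Ω → ℝ := fun ω => X ω + W ω with hYdef
  have hYmeas : Measurable Y := hXm.add hWm
  have hm : MeasurableSpace.comap Y Real.measurableSpace ≤ _ := hYmeas.comap_le
  haveI : SigmaFinite (μ.trim hm) := inferInstance
  have hY : MemLp Y 2 μ := hX.add hW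
  have hXi : Integrable X μ := hX.integrable one_le_two
  have hWi : Integrable W μ := hW.integrable one_le_two
  set a := ∫ ω, X ω ∂μ with hadef
  have hYint : ∫ ω, Y ω ∂μ = a := by
    simp only [hYdef]
    rw [integral_add hXi hWi, hWmean, add_zero]
  set f := μ[X|MeasurableSpace.comap Y Real.measurableSpace] with hfdef
  have hfL2 : MemLp f 2 μ := memLp_condexp_two hm hX
  have hfint : ∫ ω, f ω ∂μ = a := integral_condExp hm
  -- pull-out property
  have hsm : StronglyMeasurable[MeasurableSpace.comap Y Real.measurableSpace] (fun ω => Y ω - a) :=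
    ((comap_measurable Y).sub measurable_const).stronglyMeasurable
  have hint1 : Integrable (fun ω => (Y ω - a) * X ω) μ :=
    memLp_mul_int (hY.sub (memLp_const a)) hX
  have hint2 : Integrable (fun ω => (Y ω - a) * f ω) μ :=
    memLp_mul_int (hY.sub (memLp_const a)) hfL2
  have key1 : ∫ ω, (Y ω - a) * X ω ∂μ = ∫ ω, (Y ω - a) * f ω ∂μ := by
    have hpull := condExp_mul_of_stronglyMeasurable_left (m := MeasurableSpace.comap Y Real.measurableSpace) (μ := μ) (g := X) hsm hint1 hXi
    calc ∫ ω, (Y ω - a) * X ω ∂μ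
        = ∫ ω, (μ[(fun ω => Y ω - a) * X|MeasurableSpace.comap Y Real.measurableSpace]) ω ∂μ := (integral_condExp hm).symm
      _ = ∫ ω, (Y ω - a) * f ω ∂μ := integral_congr_ae hpull
  -- replace X by f in the covariance
  have hcov : ∫ ω, (Y ω - a) * (X ω - a) ∂μ = ∫ ω, (Y ω - a) * (f ω - a) ∂μ := by
    have h1 : Integrable (fun ω => (Y ω - a) * (X ω - a)) μ :=
      memLp_mul_int (hY.sub (memLp_const a)) (hX.sub (memLp_const a))
    have h2 : Integrable (fun ω => (Y ω - a) * (f ω - a)) μ :=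
      memLp_mul_int (hY.sub (memLp_const a)) (hfL2.sub (memLp_const a))
    rw [← sub_eq_zero, ← integral_sub h1 h2]
    have : ∀ ω, (Y ω - a) * (X ω - a) - (Y ω - a) * (f ω - a)
        = (Y ω - a) * X ω - (Y ω - a) * f ω := fun ω => by ring
    rw [integral_congr_ae (Filter.Eventually.of_forall this), integral_sub hint1 hint2, key1,
      sub_self]
  -- the covariance equals the variance of X
  have hvarX : variance X μ = ∫ ω, (X ω - a) ^ 2 ∂μ := by
    rw [variance_eq_integral hX.aemeasurable]
  have hXW : IndepFun (fun ω => X ω - a) W μ :=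
    hindep.comp (measurable_id.sub_const a) measurable_id
  have hkey2 : ∫ ω, (Y ω - a) * (X ω - a) ∂μ = variance X μ := by
    have hsq : Integrable (fun ω => (X ω - a) ^ 2) μ := (hX.sub (memLp_const a)).integrable_sq
    have hmul : Integrable (fun ω => (X ω - a) * W ω) μ :=
      memLp_mul_int (hX.sub (memLp_const a)) hW
    have hexp : ∀ ω, (Y ω - a) * (X ω - a) = (X ω - a) ^ 2 + (X ω - a) * W ω := fun ω => by
      simp only [hYdef]; ring
    have hzero : ∫ ω, (X ω - a) * W ω ∂μ = 0 := by
      have h := hXW.integral_mul_eq_mul_integral (hXi.sub (integrable_const a)).1 hWi.1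
      calc ∫ ω, (X ω - a) * W ω ∂μ = integral μ ((fun ω => X ω - a) * W) := rfl
        _ = integral μ (fun ω => X ω - a) * integral μ W := h
        _ = 0 := by rw [show integral μ W = 0 from hWmean, mul_zero]
    rw [integral_congr_ae (Filter.Eventually.of_forall hexp), integral_add hsq hmul, hzero,
      add_zero, hvarX]
  -- variances as central second moments
  have hvarf : variance f μ = ∫ ω, (f ω - a) ^ 2 ∂μ := by
    rw [variance_eq_integral hfL2.aemeasurable]
    exact integral_congr_ae (Filter.Eventually.of_forall fun ω => by simp [hfint])
  have hvarY : variance Y μ = ∫ ω, (Y ω - a) ^ 2 ∂μ := by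
    rw [variance_eq_integral hY.aemeasurable]
    exact integral_congr_ae (Filter.Eventually.of_forall fun ω => by simp [hYint])
  -- Cauchy-Schwarz
  have hcs := cs_integral (hfL2.sub (memLp_const a)) (hY.sub (memLp_const a))
  have hfinal : variance X μ = ∫ ω, (f ω - a) * (Y ω - a) ∂μ := by
    rw [← hkey2, hcov]
    exact integral_congr_ae (Filter.Eventually.of_forall fun ω => by ring)
  rw [ge_iff_le, hfinal, hvarf, hvarY]
  exact hcs
end

section
/- Tweedie's formula: if Y = X + W with X square-integrable having density p_X and W an independent centered Gaussian of variance σ_W^2 > 0, then for every y, E[X | Y = y] = y + σ_W^2 · (d/dy) log p_Y(y), where p_Y is the density of Y (the convolution of p_X with the Gaussian density). -/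
open MeasureTheory ProbabilityTheory Real

lemma gauss_hasDerivAt (σW2 : NNReal) (hσ : 0 < (σW2 : ℝ)) (u : ℝ) :
    HasDerivAt (gaussianPDFReal 0 σW2) (-(u / σW2) * gaussianPDFReal 0 σW2 u) u := by
  have hfun : gaussianPDFReal 0 σW2
      = fun x => (Real.sqrt (2 * π * σW2))⁻¹ * Real.exp (-x ^ 2 / (2 * (σW2 : ℝ))) := by
    funext x; simp [gaussianPDFReal]
  rw [hfun]
  have h1 : HasDerivAt (fun u : ℝ => -u ^ 2 / (2 * (σW2 : ℝ))) (-(u / σW2)) u := by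
    have h := ((hasDerivAt_pow 2 u).neg).div_const (2 * (σW2 : ℝ))
    exact h.congr_deriv (by field_simp; ring)
  have h2 := (h1.exp).const_mul ((Real.sqrt (2 * π * σW2))⁻¹)
  exact h2.congr_deriv (by beta_reduce; ring)

lemma gauss_le (σW2 : NNReal) (u : ℝ) :
    gaussianPDFReal 0 σW2 u ≤ (Real.sqrt (2 * π * σW2))⁻¹ := by
  simp only [gaussianPDFReal, sub_zero]
  have h : Real.exp (-u ^ 2 / (2 * (σW2 : ℝ))) ≤ 1 := by
    apply Real.exp_le_one_iff.mpr
    apply div_nonpos_of_nonpos_of_nonneg (neg_nonpos.mpr (sq_nonneg u)) (by positivity)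
  calc (Real.sqrt (2 * π * σW2))⁻¹ * Real.exp (-u ^ 2 / (2 * (σW2 : ℝ)))
      ≤ (Real.sqrt (2 * π * σW2))⁻¹ * 1 := by
        apply mul_le_mul_of_nonneg_left h (by positivity)
    _ = (Real.sqrt (2 * π * σW2))⁻¹ := mul_one _

/-- Tweedie's formula: for `Y = X + W` with `X` having density `pX` (square-integrable)
and `W ~ N(0, σW²)` independent, `E[X|Y = y] = y + σW² (d/dy) log p_Y(y)`, where
`p_Y(y) = ∫ pX(s) φ_W(y - s) ds` and `E[X|Y = y] = (∫ s pX(s) φ_W(y - s) ds) / p_Y(y)`. -/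
theorem tweedie_formula (pX : ℝ → ℝ) (σW2 : NNReal) (hσ : 0 < (σW2 : ℝ))
    (hmeas : Measurable pX) (hnonneg : ∀ x, 0 ≤ pX x)
    (hdens : ∫ x, pX x = 1)
    (hL2 : Integrable (fun s => s ^ 2 * pX s)) :
    ∀ y : ℝ,
      (∫ s, s * pX s * gaussianPDFReal 0 σW2 (y - s))
          / (∫ s, pX s * gaussianPDFReal 0 σW2 (y - s))
        = y + (σW2 : ℝ)
            * deriv (fun t => Real.log (∫ s, pX s * gaussianPDFReal 0 σW2 (t - s))) y := by
  intro y
  set σ : ℝ := (σW2 : ℝ) with hσdef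
  have hσne : σ ≠ 0 := ne_of_gt hσ
  set φ : ℝ → ℝ := gaussianPDFReal 0 σW2 with hφdef
  set C : ℝ := (Real.sqrt (2 * π * σ))⁻¹ with hCdef
  have hC0 : 0 ≤ C := by positivity
  have hσW2ne : σW2 ≠ 0 := NNReal.coe_ne_zero.mp hσne
  have hφpos : ∀ u, 0 < φ u := fun u => gaussianPDFReal_pos 0 σW2 u hσW2ne
  have hφle : ∀ u, φ u ≤ C := fun u => gauss_le σW2 u
  have hφmeas : Measurable φ := measurable_gaussianPDFReal 0 σW2
  -- integrability of pX
  have hIntpX : Integrable pX := by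
    by_contra h
    rw [integral_undef h] at hdens
    norm_num at hdens
  have hIntabs : Integrable (fun s => |s| * pX s) := by
    refine (hIntpX.add hL2).mono (measurable_abs.mul hmeas).aestronglyMeasurable ?_
    filter_upwards with s
    have h1 : |s| ≤ 1 + s ^ 2 := by nlinarith [sq_nonneg (|s| - 1), sq_abs s]
    have h2 : 0 ≤ pX s + s ^ 2 * pX s :=
      add_nonneg (hnonneg s) (mul_nonneg (sq_nonneg s) (hnonneg s))
    simp only [Pi.add_apply, Real.norm_eq_abs,
      abs_of_nonneg (mul_nonneg (abs_nonneg s) (hnonneg s)), abs_of_nonneg h2]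
    nlinarith [hnonneg s, mul_le_mul_of_nonneg_right h1 (hnonneg s)]
  -- measurability of integrands
  have hmeasF : ∀ t : ℝ, AEStronglyMeasurable (fun s => pX s * φ (t - s)) volume := by
    intro t
    exact (hmeas.mul (hφmeas.comp (measurable_const.sub measurable_id))).aestronglyMeasurable
  -- integrability of p_Y integrand
  have hIntF : ∀ t : ℝ, Integrable (fun s => pX s * φ (t - s)) := by
    intro t
    refine (hIntpX.const_mul C).mono (hmeasF t) ?_
    filter_upwards with s
    have h0 : 0 ≤ pX s * φ (t - s) := mul_nonneg (hnonneg s) (hφpos _).le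
    simp only [Real.norm_eq_abs, abs_of_nonneg h0, abs_of_nonneg (mul_nonneg hC0 (hnonneg s))]
    calc pX s * φ (t - s) ≤ pX s * C := mul_le_mul_of_nonneg_left (hφle _) (hnonneg s)
      _ = C * pX s := mul_comm _ _
  -- integrability of s * pX s * φ (t - s)
  have hIntF1 : ∀ t : ℝ, Integrable (fun s => s * pX s * φ (t - s)) := by
    intro t
    refine (hIntabs.const_mul C).mono
      ((measurable_id.mul hmeas).mul
        (hφmeas.comp (measurable_const.sub measurable_id))).aestronglyMeasurable ?_
    filter_upwards with s
    have h0 : 0 ≤ |s| * pX s := mul_nonneg (abs_nonneg s) (hnonneg s)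
    simp only [Real.norm_eq_abs, abs_of_nonneg (mul_nonneg hC0 h0)]
    rw [abs_mul, abs_mul, abs_of_nonneg (hnonneg s), abs_of_nonneg (hφpos _).le]
    calc |s| * pX s * φ (t - s) ≤ |s| * pX s * C :=
          mul_le_mul_of_nonneg_left (hφle _) h0
      _ = C * (|s| * pX s) := by ring
  -- positivity of p_Y
  have hI0pos : ∀ t : ℝ, 0 < ∫ s, pX s * φ (t - s) := by
    intro t
    have hnn : ∀ s, 0 ≤ pX s * φ (t - s) := fun s => mul_nonneg (hnonneg s) (hφpos _).le
    rcases lt_or_eq_of_le (integral_nonneg (f := fun s => pX s * φ (t - s)) hnn) with h | h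
    · exact h
    exfalso
    have h0 : (fun s => pX s * φ (t - s)) =ᵐ[volume] 0 :=
      (integral_eq_zero_iff_of_nonneg hnn (hIntF t)).mp h.symm
    have hpX0 : pX =ᵐ[volume] 0 := by
      filter_upwards [h0] with s hs
      have := (hφpos (t - s)).ne'
      rcases mul_eq_zero.mp hs with h' | h'
      · exact h'
      · exact absurd h' this
    rw [integral_congr_ae hpX0] at hdens
    simp at hdens
  -- derivative under the integral sign
  set F' : ℝ → ℝ → ℝ := fun t s => pX s * (-((t - s) / σ) * φ (t - s)) with hF'def
  have hder : HasDerivAt (fun t => ∫ s, pX s * φ (t - s)) (∫ s, F' y s) y := by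
    have hbound_int :
        Integrable (fun s => C / σ * ((1 + |y|) * pX s + |s| * pX s)) :=
      ((hIntpX.const_mul (1 + |y|)).add hIntabs).const_mul (C / σ)
    refine (hasDerivAt_integral_of_dominated_loc_of_deriv_le (F := fun t s => pX s * φ (t - s))
      (F' := F') (x₀ := y)
      (bound := fun s => C / σ * ((1 + |y|) * pX s + |s| * pX s)) (Metric.ball_mem_nhds y one_pos)
      (Filter.Eventually.of_forall fun t => hmeasF t) (hIntF y) ?_ ?_ hbound_int ?_).2
    · exact (hmeas.mul
        (((measurable_const.sub measurable_id).div_const σ).neg.mul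
          (hφmeas.comp (measurable_const.sub measurable_id)))).aestronglyMeasurable
    · filter_upwards with s
      intro t ht
      simp only [Metric.mem_ball, Real.dist_eq] at ht
      have habs : |t - s| ≤ 1 + |y| + |s| := by
        have : t - s = (t - y) + (y - s) := by ring
        calc |t - s| ≤ |t - y| + |y - s| := by rw [this]; exact abs_add_le _ _
          _ ≤ 1 + (|y| + |s|) := by
              have h2 : |y - s| ≤ |y| + |s| := abs_sub y s
              linarith [ht.le]
          _ = 1 + |y| + |s| := by ring
      have h0 : 0 ≤ φ (t - s) := (hφpos _).le
      simp only [hF'def, Real.norm_eq_abs, abs_mul, abs_of_nonneg (hnonneg s),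
        abs_of_nonneg h0, abs_neg, abs_div, abs_of_nonneg hσ.le]
      calc pX s * (|t - s| / σ * φ (t - s))
          ≤ pX s * ((1 + |y| + |s|) / σ * C) := by
            apply mul_le_mul_of_nonneg_left _ (hnonneg s)
            apply mul_le_mul _ (hφle _) h0 (div_nonneg (by positivity) hσ.le)
            gcongr
        _ = C / σ * ((1 + |y|) * pX s + |s| * pX s) := by ring
    · filter_upwards with s
      intro t ht
      have hg := gauss_hasDerivAt σW2 hσ (t - s)
      have hsub : HasDerivAt (fun t : ℝ => t - s) 1 t := (hasDerivAt_id t).sub_const s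
      have hcomp := (hg.comp t hsub)
      have := hcomp.const_mul (pX s)
      simpa [hF'def, hφdef] using this
  -- value of ∫ F' y
  have hF'val : ∫ s, F' y s
      = (∫ s, s * pX s * φ (y - s)) / σ - y / σ * ∫ s, pX s * φ (y - s) := by
    have heq : (fun s => F' y s)
        = fun s => (s * pX s * φ (y - s)) / σ - y / σ * (pX s * φ (y - s)) := by
      funext s
      simp only [hF'def]
      field_simp
      ring
    rw [heq, integral_sub ((hIntF1 y).div_const σ) ((hIntF y).const_mul (y / σ)),
      integral_div, integral_const_mul]
  -- derivative of the log
  have hlog : deriv (fun t => Real.log (∫ s, pX s * φ (t - s))) y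
      = (∫ s, F' y s) / (∫ s, pX s * φ (y - s)) :=
    (hder.log (hI0pos y).ne').deriv
  rw [hlog, hF'val]
  have hB := hI0pos y
  field_simp
  ring
end

section
/- Hatsell–Nolte identity: if Y = X + W with X square-integrable with density and W independent Gaussian N(0, σ_W^2), σ_W^2 > 0, then for all y, σ_W^2 · (d/dy) E[X | Y = y] = Var(X | Y = y). -/
open MeasureTheory ProbabilityTheory
open Real

lemma gauss_hasDeriv (σW2 : NNReal) (hσ : 0 < (σW2 : ℝ)) (x : ℝ) :
    HasDerivAt (gaussianPDFReal 0 σW2)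
      (-(x / (σW2 : ℝ)) * gaussianPDFReal 0 σW2 x) x := by
  have h1 : HasDerivAt (fun x : ℝ => -(x - 0) ^ 2 / (2 * (σW2 : ℝ)))
      (-(x / (σW2 : ℝ))) x := by
    have h := (((hasDerivAt_id x).sub_const (0:ℝ)).pow 2).neg.div_const (2 * (σW2 : ℝ))
    refine h.congr_deriv ?_
    norm_num
    field_simp
  have h2 := (h1.exp).const_mul (√(2 * π * (σW2 : ℝ)))⁻¹
  simp only [gaussianPDFReal]
  refine h2.congr_deriv ?_
  ring

lemma abs_mul_exp_le (σ2 : ℝ) (hσ : 0 < σ2) (x : ℝ) :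
    |x| * Real.exp (-(x - 0) ^ 2 / (2 * σ2)) ≤ √σ2 := by
  have hr : 0 < √σ2 := Real.sqrt_pos.2 hσ
  have hr2 : √σ2 * √σ2 = σ2 := Real.mul_self_sqrt hσ.le
  have he : 1 + x ^ 2 / (2 * σ2) ≤ Real.exp (x ^ 2 / (2 * σ2)) :=
    Real.add_one_le_exp _ |>.trans_eq' (by ring_nf)
  have hep : 0 < Real.exp (x ^ 2 / (2 * σ2)) := Real.exp_pos _
  have he2 : 2 * σ2 + x ^ 2 ≤ 2 * σ2 * Real.exp (x ^ 2 / (2 * σ2)) := by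
    have := mul_le_mul_of_nonneg_left he (by linarith : (0:ℝ) ≤ 2 * σ2)
    calc 2 * σ2 + x ^ 2 = 2 * σ2 * (1 + x ^ 2 / (2 * σ2)) := by field_simp
      _ ≤ 2 * σ2 * Real.exp (x ^ 2 / (2 * σ2)) := this
  have key : |x| * (2 * σ2) ≤ √σ2 * (2 * σ2 + x ^ 2) := by
    nlinarith [sq_nonneg (|x| - √σ2), sq_abs x, abs_nonneg x]
  have h3 : |x| ≤ √σ2 * Real.exp (x ^ 2 / (2 * σ2)) := by
    nlinarith [mul_le_mul_of_nonneg_left he2 hr.le]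
  have hrw : Real.exp (-(x - 0) ^ 2 / (2 * σ2)) = (Real.exp (x ^ 2 / (2 * σ2)))⁻¹ := by
    rw [← Real.exp_neg]; ring_nf
  rw [hrw, mul_inv_le_iff₀ hep]
  linarith [h3]

/-- Hatsell–Nolte identity: for `Y = X + W` with `X` having density `pX`
(square-integrable) and `W ~ N(0, σW²)` independent,
`σW² (d/dy) E[X|Y = y] = Var(X|Y = y)`, where the conditional moments are given by
`E[X^p|Y = y] = (∫ s^p pX(s) φ_W(y-s) ds) / p_Y(y)`. -/
theorem hatsell_nolte (pX : ℝ → ℝ) (σW2 : NNReal) (hσ : 0 < (σW2 : ℝ))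
    (hmeas : Measurable pX) (hnonneg : ∀ x, 0 ≤ pX x)
    (hdens : ∫ x, pX x = 1)
    (hL2 : Integrable (fun s => s ^ 2 * pX s)) :
    ∀ y : ℝ,
      (σW2 : ℝ) * deriv (fun t =>
          (∫ s, s * pX s * gaussianPDFReal 0 σW2 (t - s))
            / (∫ s, pX s * gaussianPDFReal 0 σW2 (t - s))) y
        = (∫ s, s ^ 2 * pX s * gaussianPDFReal 0 σW2 (y - s))
              / (∫ s, pX s * gaussianPDFReal 0 σW2 (y - s))
            - ((∫ s, s * pX s * gaussianPDFReal 0 σW2 (y - s))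
              / (∫ s, pX s * gaussianPDFReal 0 σW2 (y - s))) ^ 2 := by
  intro y
  set σ2 : ℝ := (σW2 : ℝ) with hσ2def
  have hσ0 : σW2 ≠ 0 := by
    intro h
    have h' : (0:ℝ) < (σW2:ℝ) := hσ
    rw [h] at h'; simp at h'
  set φ : ℝ → ℝ := gaussianPDFReal 0 σW2 with hφdef
  have hφpos : ∀ x, 0 < φ x := fun x => gaussianPDFReal_pos 0 σW2 x hσ0
  set C : ℝ := (√(2 * π * σ2))⁻¹ with hCdef
  have hCpos : 0 < C := by
    rw [hCdef]
    have : (0:ℝ) < 2 * π * σ2 := by positivity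
    positivity
  have hφle : ∀ x, φ x ≤ C := by
    intro x
    rw [hφdef, gaussianPDFReal]
    calc (√(2 * π * σ2))⁻¹ * rexp (-(x - 0) ^ 2 / (2 * σ2))
        ≤ (√(2 * π * σ2))⁻¹ * 1 := by
          apply mul_le_mul_of_nonneg_left _ hCpos.le
          rw [Real.exp_le_one_iff]
          have : (0:ℝ) ≤ (x - 0)^2 := sq_nonneg _
          have h2 : (0:ℝ) < 2 * σ2 := by linarith
          exact div_nonpos_of_nonpos_of_nonneg (by linarith) h2.le
      _ = C := by rw [mul_one]
  have hφabs : ∀ u : ℝ, |u| * φ u ≤ √σ2 * C := by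
    intro u
    rw [hφdef, gaussianPDFReal]
    calc |u| * ((√(2 * π * σ2))⁻¹ * rexp (-(u - 0) ^ 2 / (2 * σ2)))
        = (|u| * rexp (-(u - 0) ^ 2 / (2 * σ2))) * C := by rw [hCdef]; ring
      _ ≤ √σ2 * C := mul_le_mul_of_nonneg_right (abs_mul_exp_le σ2 hσ u) hCpos.le
  have hφmeas : Measurable φ := measurable_gaussianPDFReal 0 σW2
  -- integrability of pX and s * pX
  have hpXi : Integrable pX := by
    by_contra h; rw [integral_undef h] at hdens; norm_num at hdens
  have h1i : Integrable (fun s => s * pX s) := by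
    apply (hpXi.add hL2).mono ((measurable_id.mul hmeas).aestronglyMeasurable)
    filter_upwards with s
    simp only [Pi.mul_apply, id_eq, Pi.add_apply, Real.norm_eq_abs]
    have h2 : |s| ≤ 1 + s ^ 2 := by nlinarith [sq_abs s, abs_nonneg s]
    have h3 : |s| * pX s ≤ (1 + s ^ 2) * pX s := mul_le_mul_of_nonneg_right h2 (hnonneg s)
    have h4 : pX s + s ^ 2 * pX s ≤ |pX s + s ^ 2 * pX s| := le_abs_self _
    rw [abs_mul, abs_of_nonneg (hnonneg s)]
    nlinarith
  -- generic integrability of g s * φ (t - s)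
  have hint : ∀ (g : ℝ → ℝ), Measurable g → Integrable g → ∀ t : ℝ,
      Integrable (fun s => g s * φ (t - s)) := by
    intro g hg hgi t
    apply (hgi.const_mul C).mono
      ((hg.mul (hφmeas.comp (measurable_const.sub measurable_id))).aestronglyMeasurable)
    filter_upwards with s
    show ‖g s * φ (t - s)‖ ≤ ‖C * g s‖
    rw [Real.norm_eq_abs, Real.norm_eq_abs, abs_mul, abs_of_nonneg (hφpos (t - s)).le,
      abs_mul]
    calc |g s| * φ (t - s) ≤ |g s| * C := mul_le_mul_of_nonneg_left (hφle _) (abs_nonneg _)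
      _ = |C| * |g s| := by rw [abs_of_nonneg hCpos.le]; ring
  have hI0 : ∀ t, Integrable (fun s => pX s * φ (t - s)) := hint pX hmeas hpXi
  have hI1 : ∀ t, Integrable (fun s => s * pX s * φ (t - s)) :=
    hint (fun s => s * pX s) (measurable_id.mul hmeas) h1i
  have hI2 : ∀ t, Integrable (fun s => s ^ 2 * pX s * φ (t - s)) :=
    hint (fun s => s ^ 2 * pX s) ((measurable_id.pow_const 2).mul hmeas) hL2
  -- positivity of the denominator
  have hm0pos : 0 < ∫ s, pX s * φ (y - s) := by
    rcases lt_or_eq_of_le (integral_nonneg (f := fun s => pX s * φ (y - s)) fun s => mul_nonneg (hnonneg s) (hφpos _).le)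
      with h | h
    · exact h
    exfalso
    have hz := (integral_eq_zero_iff_of_nonneg
      (fun s => mul_nonneg (hnonneg s) (hφpos _).le) (hI0 y)).1 h.symm
    have hzero : pX =ᵐ[volume] 0 := by
      filter_upwards [hz] with s hs
      simp only [Pi.zero_apply] at hs ⊢
      rcases mul_eq_zero.1 hs with h' | h'
      · exact h'
      · exact absurd h' (hφpos (y - s)).ne'
    rw [integral_congr_ae hzero] at hdens
    simp at hdens
  -- differentiation under the integral sign
  have hderiv : ∀ (g : ℝ → ℝ), Measurable g → Integrable g →
      HasDerivAt (fun t => ∫ s, g s * φ (t - s))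
        (∫ s, g s * (-((y - s) / σ2) * φ (y - s))) y := by
    intro g hg hgi
    have key := hasDerivAt_integral_of_dominated_loc_of_deriv_le (μ := volume)
      (F := fun t s => g s * φ (t - s))
      (F' := fun t s => g s * (-((t - s) / σ2) * φ (t - s)))
      (x₀ := y)
      (bound := fun s => |g s| * (√σ2 * C / σ2)) (Metric.ball_mem_nhds y one_pos)
      (Filter.Eventually.of_forall fun t =>
        (hg.mul (hφmeas.comp (measurable_const.sub measurable_id))).aestronglyMeasurable)
      (hint g hg hgi y)
      ((hg.mul ((((measurable_const.sub measurable_id).div_const σ2).neg).mul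
        (hφmeas.comp (measurable_const.sub measurable_id)))).aestronglyMeasurable)
      ?_ ((hgi.abs.mul_const _))
      ?_
    · exact key.2
    · filter_upwards with s
      intro t _
      show ‖g s * (-((t - s) / σ2) * φ (t - s))‖ ≤ |g s| * (√σ2 * C / σ2)
      rw [Real.norm_eq_abs, abs_mul, abs_mul, abs_neg, abs_div,
        abs_of_nonneg (hφpos (t - s)).le, abs_of_nonneg hσ.le]
      have e : |t - s| / σ2 * φ (t - s) = |t - s| * φ (t - s) / σ2 := by ring
      rw [e]
      apply mul_le_mul_of_nonneg_left _ (abs_nonneg (g s))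
      exact (div_le_div_iff_of_pos_right hσ).2 (hφabs (t - s))
    · filter_upwards with s
      intro t _
      have h1 : HasDerivAt (fun t => φ (t - s))
          (-((t - s) / σ2) * φ (t - s)) t := by
        have := (gauss_hasDeriv σW2 hσ (t - s)).comp t ((hasDerivAt_id t).sub_const s)
        exact this.congr_deriv (mul_one _)
      have := h1.const_mul (g s)
      convert this using 1
  -- identify the two derivatives
  set M0 : ℝ := ∫ s, pX s * φ (y - s) with hM0
  set M1 : ℝ := ∫ s, s * pX s * φ (y - s) with hM1
  set M2 : ℝ := ∫ s, s ^ 2 * pX s * φ (y - s) with hM2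
  have hd0 : HasDerivAt (fun t => ∫ s, pX s * φ (t - s))
      (σ2⁻¹ * M1 - σ2⁻¹ * y * M0) y := by
    have h := hderiv pX hmeas hpXi
    convert h using 1
    have e : (fun s => pX s * (-((y - s) / σ2) * φ (y - s)))
        = fun s => σ2⁻¹ * (s * pX s * φ (y - s)) - (σ2⁻¹ * y) * (pX s * φ (y - s)) := by
      ext s; rw [div_eq_mul_inv]; ring
    rw [e, integral_sub ((hI1 y).const_mul _) ((hI0 y).const_mul _),
      integral_const_mul, integral_const_mul, ← hM0, ← hM1]
  have hd1 : HasDerivAt (fun t => ∫ s, s * pX s * φ (t - s))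
      (σ2⁻¹ * M2 - σ2⁻¹ * y * M1) y := by
    have h := hderiv (fun s => s * pX s) (measurable_id.mul hmeas) h1i
    convert h using 1
    have e : (fun s => s * pX s * (-((y - s) / σ2) * φ (y - s)))
        = fun s => σ2⁻¹ * (s ^ 2 * pX s * φ (y - s)) - (σ2⁻¹ * y) * (s * pX s * φ (y - s)) := by
      ext s; rw [div_eq_mul_inv]; ring
    rw [e, integral_sub ((hI2 y).const_mul _) ((hI1 y).const_mul _),
      integral_const_mul, integral_const_mul, ← hM1, ← hM2]
  have hq : HasDerivAt (fun t =>
      (∫ s, s * pX s * φ (t - s)) / (∫ s, pX s * φ (t - s)))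
      (((σ2⁻¹ * M2 - σ2⁻¹ * y * M1) * M0 - M1 * (σ2⁻¹ * M1 - σ2⁻¹ * y * M0)) / M0 ^ 2) y :=
    hd1.div hd0 hm0pos.ne'
  rw [hq.deriv]
  have hM0ne : M0 ≠ 0 := hm0pos.ne'
  field_simp
  ring
end

section
/- Second-derivative identity for the output density: under the additive Gaussian noise model, E[X^2 | Y = y] = σ_W^4 p_Y''(y)/p_Y(y) + 2 σ_W^2 y p_Y'(y)/p_Y(y) + y^2 + σ_W^2 for all y. -/
open MeasureTheory ProbabilityTheory Real

lemma sq_exp_bound (v x : ℝ) (hv : 0 < v) : x ^ 2 * Real.exp (-x ^ 2 / (2 * v)) ≤ 2 * v := by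
  have h1 : x ^ 2 / (2 * v) ≤ Real.exp (x ^ 2 / (2 * v)) := by
    have := Real.add_one_le_exp (x ^ 2 / (2 * v))
    linarith
  have h2 : Real.exp (-x ^ 2 / (2 * v)) = (Real.exp (x ^ 2 / (2 * v)))⁻¹ := by
    rw [← Real.exp_neg]; ring_nf
  have h3 : x ^ 2 ≤ 2 * v * Real.exp (x ^ 2 / (2 * v)) := by
    rw [div_le_iff₀ (by positivity)] at h1; linarith
  rw [h2]
  have h4 : (0:ℝ) < Real.exp (x ^ 2 / (2 * v)) := Real.exp_pos _
  rw [mul_inv_le_iff₀' h4]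
  linarith

lemma exp_le_one' (v x : ℝ) (hv : 0 < v) : Real.exp (-x ^ 2 / (2 * v)) ≤ 1 := by
  apply Real.exp_le_one_iff.mpr
  apply div_nonpos_of_nonpos_of_nonneg (by nlinarith [sq_nonneg x]) (by positivity)

lemma abs_exp_bound (v x : ℝ) (hv : 0 < v) : |x| * Real.exp (-x ^ 2 / (2 * v)) ≤ 1 + 2 * v := by
  have h0 := exp_le_one' v x hv
  have h1 : |x| ≤ 1 + x ^ 2 := by nlinarith [sq_abs x, abs_nonneg x, sq_nonneg (|x| - 1)]
  have h2 := sq_exp_bound v x hv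
  have h3 : (0:ℝ) < Real.exp (-x ^ 2 / (2 * v)) := Real.exp_pos _
  nlinarith [mul_le_mul_of_nonneg_right h1 h3.le]

lemma gauss_hasDerivAt_s6 (v s t : ℝ) (hv : 0 < v) :
    HasDerivAt (fun t => Real.exp (-(t - s) ^ 2 / (2 * v)))
      ((-(t - s) / v) * Real.exp (-(t - s) ^ 2 / (2 * v))) t := by
  have h1 : HasDerivAt (fun t : ℝ => -(t - s) ^ 2 / (2 * v)) (-(t - s) / v) t := by
    have : HasDerivAt (fun t : ℝ => t - s) 1 t := (hasDerivAt_id t).sub_const s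
    have h2 := ((this.pow 2).neg).div_const (2 * v)
    refine h2.congr_deriv ?_
    field_simp; ring
  have := (Real.hasDerivAt_exp (-(t - s) ^ 2 / (2 * v))).comp t h1
  refine this.congr_deriv ?_
  ring

lemma lemA (pX : ℝ → ℝ) (hmeas : Measurable pX) (hnonneg : ∀ x, 0 ≤ pX x)
    (hInt : Integrable pX) (v c : ℝ) (hv : 0 < v) (hc : 0 ≤ c) (t : ℝ) :
    Integrable (fun s => pX s * (-(t - s) / v * (c * Real.exp (-(t - s) ^ 2 / (2 * v))))) ∧
    HasDerivAt (fun t => ∫ s, pX s * (c * Real.exp (-(t - s) ^ 2 / (2 * v))))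
      (∫ s, pX s * (-(t - s) / v * (c * Real.exp (-(t - s) ^ 2 / (2 * v))))) t := by
  have hcont : ∀ x : ℝ, Continuous fun s : ℝ => -(x - s) / v * (c * Real.exp (-(x - s) ^ 2 / (2 * v))) := by
    intro x; fun_prop
  have hcont0 : ∀ x : ℝ, Continuous fun s : ℝ => c * Real.exp (-(x - s) ^ 2 / (2 * v)) := by
    intro x; fun_prop
  refine hasDerivAt_integral_of_dominated_loc_of_deriv_le (s := Metric.ball t 1)
    (F := fun x s => pX s * (c * Real.exp (-(x - s) ^ 2 / (2 * v))))
    (F' := fun x s => pX s * (-(x - s) / v * (c * Real.exp (-(x - s) ^ 2 / (2 * v)))))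
    (bound := fun s => c * ((1 + 2 * v) / v) * pX s)
    (Metric.ball_mem_nhds t one_pos) ?_ ?_ ?_ ?_ ?_ ?_
  · exact Filter.Eventually.of_forall fun x =>
      ((hmeas.mul (hcont0 x).measurable).aestronglyMeasurable)
  · apply (hInt.const_mul c).mono ((hmeas.mul (hcont0 t).measurable).aestronglyMeasurable)
    apply Filter.Eventually.of_forall
    intro s
    have hE : Real.exp (-(t - s) ^ 2 / (2 * v)) ≤ 1 := exp_le_one' v _ hv
    have hEpos := (Real.exp_pos (-(t - s) ^ 2 / (2 * v))).le
    simp only [Pi.mul_apply, Real.norm_eq_abs, abs_mul, Real.abs_exp, abs_of_nonneg (hnonneg s), abs_of_nonneg hc]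
    nlinarith [mul_le_mul_of_nonneg_left hE (mul_nonneg (hnonneg s) hc)]
  · exact (hmeas.mul (hcont t).measurable).aestronglyMeasurable
  · apply Filter.Eventually.of_forall
    intro s x _
    have hbd : |x - s| * Real.exp (-(x - s) ^ 2 / (2 * v)) / v ≤ (1 + 2 * v) / v := by
      gcongr
      exact abs_exp_bound v (x - s) hv
    calc ‖pX s * (-(x - s) / v * (c * Real.exp (-(x - s) ^ 2 / (2 * v))))‖
        = pX s * (c * (|x - s| * Real.exp (-(x - s) ^ 2 / (2 * v)) / v)) := by
          simp only [Real.norm_eq_abs, abs_mul, abs_div, abs_neg, Real.abs_exp,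
            abs_of_nonneg (hnonneg s), abs_of_pos hv, abs_of_nonneg hc]
          ring
      _ ≤ pX s * (c * ((1 + 2 * v) / v)) :=
          mul_le_mul_of_nonneg_left (mul_le_mul_of_nonneg_left hbd hc) (hnonneg s)
      _ = c * ((1 + 2 * v) / v) * pX s := by ring
  · exact hInt.const_mul _
  · apply Filter.Eventually.of_forall
    intro s x _
    have := ((gauss_hasDerivAt_s6 v s x hv).const_mul c).const_mul (pX s)
    refine this.congr_deriv ?_
    ring

lemma lemB (pX : ℝ → ℝ) (hmeas : Measurable pX) (hnonneg : ∀ x, 0 ≤ pX x)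
    (hInt : Integrable pX) (v c : ℝ) (hv : 0 < v) (hc : 0 ≤ c) (t : ℝ) :
    Integrable (fun s => pX s * (((t - s) ^ 2 / v ^ 2 - 1 / v) * (c * Real.exp (-(t - s) ^ 2 / (2 * v))))) ∧
    HasDerivAt (fun t => ∫ s, pX s * (-(t - s) / v * (c * Real.exp (-(t - s) ^ 2 / (2 * v)))))
      (∫ s, pX s * (((t - s) ^ 2 / v ^ 2 - 1 / v) * (c * Real.exp (-(t - s) ^ 2 / (2 * v))))) t := by
  have hcont : ∀ x : ℝ, Continuous fun s : ℝ =>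
      ((x - s) ^ 2 / v ^ 2 - 1 / v) * (c * Real.exp (-(x - s) ^ 2 / (2 * v))) := by
    intro x; fun_prop
  have hcont1 : ∀ x : ℝ, Continuous fun s : ℝ => -(x - s) / v * (c * Real.exp (-(x - s) ^ 2 / (2 * v))) := by
    intro x; fun_prop
  have hnormbd : ∀ x s : ℝ,
      ‖pX s * (((x - s) ^ 2 / v ^ 2 - 1 / v) * (c * Real.exp (-(x - s) ^ 2 / (2 * v))))‖
        ≤ c * (3 / v) * pX s := by
    intro x s
    set E := Real.exp (-(x - s) ^ 2 / (2 * v)) with hE_def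
    have hEpos : 0 < E := Real.exp_pos _
    have hE1 : E ≤ 1 := exp_le_one' v _ hv
    have hS : (x - s) ^ 2 * E ≤ 2 * v := sq_exp_bound v (x - s) hv
    have hA : (0:ℝ) ≤ (x - s) ^ 2 / v ^ 2 := by positivity
    have hB : (0:ℝ) ≤ 1 / v := by positivity
    have habs : |(x - s) ^ 2 / v ^ 2 - 1 / v| ≤ (x - s) ^ 2 / v ^ 2 + 1 / v :=
      abs_le.mpr ⟨by linarith, by linarith⟩
    have h2 : (x - s) ^ 2 / v ^ 2 * E ≤ 2 / v := by
      rw [div_mul_eq_mul_div, div_le_div_iff₀ (by positivity) hv]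
      nlinarith
    have h3 : 1 / v * E ≤ 1 / v := mul_le_of_le_one_right hB hE1
    have hbd : ((x - s) ^ 2 / v ^ 2 + 1 / v) * E ≤ 3 / v := by
      have hr : ((x - s) ^ 2 / v ^ 2 + 1 / v) * E = (x - s) ^ 2 / v ^ 2 * E + 1 / v * E := by ring
      have h32 : (3:ℝ) / v = 2 / v + 1 / v := by ring
      rw [hr, h32]; linarith
    calc ‖pX s * (((x - s) ^ 2 / v ^ 2 - 1 / v) * (c * E))‖
        = pX s * (c * (|(x - s) ^ 2 / v ^ 2 - 1 / v| * E)) := by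
          simp only [Real.norm_eq_abs, abs_mul, abs_of_pos hEpos,
            abs_of_nonneg (hnonneg s), abs_of_nonneg hc]
          ring
      _ ≤ pX s * (c * (((x - s) ^ 2 / v ^ 2 + 1 / v) * E)) := by
          apply mul_le_mul_of_nonneg_left _ (hnonneg s)
          exact mul_le_mul_of_nonneg_left (mul_le_mul_of_nonneg_right habs hEpos.le) hc
      _ ≤ pX s * (c * (3 / v)) :=
          mul_le_mul_of_nonneg_left (mul_le_mul_of_nonneg_left hbd hc) (hnonneg s)
      _ = c * (3 / v) * pX s := by ring
  refine hasDerivAt_integral_of_dominated_loc_of_deriv_le (s := Metric.ball t 1)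
    (F := fun x s => pX s * (-(x - s) / v * (c * Real.exp (-(x - s) ^ 2 / (2 * v)))))
    (F' := fun x s => pX s * (((x - s) ^ 2 / v ^ 2 - 1 / v) * (c * Real.exp (-(x - s) ^ 2 / (2 * v)))))
    (bound := fun s => c * (3 / v) * pX s)
    (Metric.ball_mem_nhds t one_pos) ?_ ?_ ?_ ?_ ?_ ?_
  · exact Filter.Eventually.of_forall fun x =>
      ((hmeas.mul (hcont1 x).measurable).aestronglyMeasurable)
  · exact (lemA pX hmeas hnonneg hInt v c hv hc t).1
  · exact (hmeas.mul (hcont t).measurable).aestronglyMeasurable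
  · exact Filter.Eventually.of_forall fun s => fun x _ => hnormbd x s
  · exact hInt.const_mul _
  · apply Filter.Eventually.of_forall
    intro s x _
    have h1 : HasDerivAt (fun x : ℝ => -(x - s) / v) (-1 / v) x := by
      have := (((hasDerivAt_id x).sub_const s).neg).div_const v
      refine this.congr_deriv ?_
      ring
    have h2 : HasDerivAt (fun x : ℝ => c * Real.exp (-(x - s) ^ 2 / (2 * v)))
        (c * (-(x - s) / v * Real.exp (-(x - s) ^ 2 / (2 * v)))) x :=
      (gauss_hasDerivAt_s6 v s x hv).const_mul c
    have := (h1.mul h2).const_mul (pX s)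
    refine this.congr_deriv ?_
    field_simp
    ring

lemma lemI0 (pX : ℝ → ℝ) (hmeas : Measurable pX) (hnonneg : ∀ x, 0 ≤ pX x)
    (hInt : Integrable pX) (v c : ℝ) (hv : 0 < v) (hc : 0 ≤ c) (t : ℝ) :
    Integrable (fun s => pX s * (c * Real.exp (-(t - s) ^ 2 / (2 * v)))) := by
  have hcont0 : Continuous fun s : ℝ => c * Real.exp (-(t - s) ^ 2 / (2 * v)) := by fun_prop
  apply (hInt.const_mul c).mono ((hmeas.mul hcont0.measurable).aestronglyMeasurable)
  apply Filter.Eventually.of_forall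
  intro s
  have hE : Real.exp (-(t - s) ^ 2 / (2 * v)) ≤ 1 := exp_le_one' v _ hv
  have hEpos := (Real.exp_pos (-(t - s) ^ 2 / (2 * v))).le
  simp only [Pi.mul_apply, Real.norm_eq_abs, abs_mul, Real.abs_exp, abs_of_nonneg (hnonneg s), abs_of_nonneg hc]
  nlinarith [mul_le_mul_of_nonneg_left hE (mul_nonneg (hnonneg s) hc)]

/-- Second-derivative identity for the output density: under the additive Gaussian noise
model `Y = X + W`, the conditional second moment satisfies
`E[X²|Y = y] = σW⁴ p_Y''(y)/p_Y(y) + 2 σW² y p_Y'(y)/p_Y(y) + y² + σW²`. -/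
theorem condSecondMoment_eq (pX : ℝ → ℝ) (σW2 : NNReal) (hσ : 0 < (σW2 : ℝ))
    (hmeas : Measurable pX) (hnonneg : ∀ x, 0 ≤ pX x)
    (hdens : ∫ x, pX x = 1)
    (hL2 : Integrable (fun s => s ^ 2 * pX s)) :
    ∀ y : ℝ,
      (∫ s, s ^ 2 * pX s * gaussianPDFReal 0 σW2 (y - s))
          / (∫ s, pX s * gaussianPDFReal 0 σW2 (y - s))
        = (σW2 : ℝ) ^ 2
              * deriv (deriv (fun t => ∫ s, pX s * gaussianPDFReal 0 σW2 (t - s))) y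
              / (∫ s, pX s * gaussianPDFReal 0 σW2 (y - s))
            + 2 * (σW2 : ℝ) * y
              * deriv (fun t => ∫ s, pX s * gaussianPDFReal 0 σW2 (t - s)) y
              / (∫ s, pX s * gaussianPDFReal 0 σW2 (y - s))
            + y ^ 2 + (σW2 : ℝ) := by
  intro y
  set v : ℝ := (σW2 : ℝ) with hv_def
  have hv : 0 < v := hσ
  have hvne : v ≠ 0 := ne_of_gt hv
  set c : ℝ := (Real.sqrt (2 * π * v))⁻¹ with hc_def
  have hcpos : 0 < c := by
    rw [hc_def]
    have : 0 < Real.sqrt (2 * π * v) := Real.sqrt_pos.mpr (by positivity)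
    positivity
  have hc : 0 ≤ c := hcpos.le
  have hg : ∀ x : ℝ, gaussianPDFReal 0 σW2 x = c * Real.exp (-x ^ 2 / (2 * v)) := by
    intro x
    simp [gaussianPDFReal, hc_def, hv_def]
  have hInt : Integrable pX := by
    by_contra h
    rw [integral_undef h] at hdens; norm_num at hdens
  simp only [hg]
  have hA := fun t => lemA pX hmeas hnonneg hInt v c hv hc t
  have hB := lemB pX hmeas hnonneg hInt v c hv hc y
  have e0 := lemI0 pX hmeas hnonneg hInt v c hv hc y
  have e1 := (hA y).1
  have e2 := hB.1
  have e3 : Integrable (fun s => s ^ 2 * pX s * (c * Real.exp (-(y - s) ^ 2 / (2 * v)))) := by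
    have hcont0 : Continuous fun s : ℝ => c * Real.exp (-(y - s) ^ 2 / (2 * v)) := by fun_prop
    apply (hL2.const_mul c).mono
      ((((measurable_id'.pow_const 2).mul hmeas).mul hcont0.measurable).aestronglyMeasurable)
    apply Filter.Eventually.of_forall
    intro s
    have hE : Real.exp (-(y - s) ^ 2 / (2 * v)) ≤ 1 := exp_le_one' v _ hv
    have hEpos := (Real.exp_pos (-(y - s) ^ 2 / (2 * v))).le
    have hs2 : (0:ℝ) ≤ s ^ 2 * pX s := mul_nonneg (sq_nonneg s) (hnonneg s)
    simp only [Pi.mul_apply, Real.norm_eq_abs, abs_mul, Real.abs_exp, abs_of_nonneg (hnonneg s),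
      abs_of_nonneg hc, abs_of_nonneg (sq_nonneg s)]
    nlinarith [mul_le_mul_of_nonneg_left hE (mul_nonneg hs2 hc)]
  -- positivity of the denominator
  have h01 : 0 < ∫ x, pX x := by rw [hdens]; norm_num
  have hsupp : 0 < MeasureTheory.volume (Function.support pX) :=
    (integral_pos_iff_support_of_nonneg hnonneg hInt).mp h01
  have hI0pos : 0 < ∫ s, pX s * (c * Real.exp (-(y - s) ^ 2 / (2 * v))) := by
    rw [integral_pos_iff_support_of_nonneg
      (fun s => mul_nonneg (hnonneg s) (by positivity)) e0]
    have hsup_eq : (Function.support fun s => pX s * (c * Real.exp (-(y - s) ^ 2 / (2 * v))))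
        = Function.support pX := by
      ext s
      simp only [Function.mem_support]
      constructor
      · intro h hps; exact h (by rw [hps]; ring)
      · intro h
        exact mul_ne_zero h (by positivity)
    rw [hsup_eq]; exact hsupp
  have hI0ne : (∫ s, pX s * (c * Real.exp (-(y - s) ^ 2 / (2 * v)))) ≠ 0 := ne_of_gt hI0pos
  -- rewrite derivatives
  have hderiv1 : deriv (fun t => ∫ s, pX s * (c * Real.exp (-(t - s) ^ 2 / (2 * v))))
      = fun t => ∫ s, pX s * (-(t - s) / v * (c * Real.exp (-(t - s) ^ 2 / (2 * v)))) :=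
    funext fun t => (hA t).2.deriv
  simp only [hderiv1]
  rw [hB.2.deriv]
  -- key linear identity
  have key : v ^ 2 * (∫ s, pX s * (((y - s) ^ 2 / v ^ 2 - 1 / v)
        * (c * Real.exp (-(y - s) ^ 2 / (2 * v)))))
      + 2 * v * y * (∫ s, pX s * (-(y - s) / v * (c * Real.exp (-(y - s) ^ 2 / (2 * v)))))
      = (∫ s, s ^ 2 * pX s * (c * Real.exp (-(y - s) ^ 2 / (2 * v))))
        - (y ^ 2 + v) * (∫ s, pX s * (c * Real.exp (-(y - s) ^ 2 / (2 * v)))) := by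
    rw [← integral_const_mul, ← integral_const_mul, ← integral_const_mul,
      ← integral_add (e2.const_mul _) (e1.const_mul _), ← integral_sub e3 (e0.const_mul _)]
    congr 1
    funext s
    field_simp
    ring
  set A2 := ∫ s, pX s * (((y - s) ^ 2 / v ^ 2 - 1 / v) * (c * Real.exp (-(y - s) ^ 2 / (2 * v)))) with hA2
  set A1 := ∫ s, pX s * (-(y - s) / v * (c * Real.exp (-(y - s) ^ 2 / (2 * v)))) with hA1
  set I2 := ∫ s, s ^ 2 * pX s * (c * Real.exp (-(y - s) ^ 2 / (2 * v))) with hI2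
  set I0 := ∫ s, pX s * (c * Real.exp (-(y - s) ^ 2 / (2 * v))) with hI0
  have hnum : v ^ 2 * A2 + 2 * v * y * A1 + (y ^ 2 + v) * I0 = I2 := by linarith [key]
  have : v ^ 2 * A2 / I0 + 2 * v * y * A1 / I0 + y ^ 2 + v = I2 / I0 := by
    rw [← hnum]; field_simp; ring
  exact this.symm
end
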